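/- Let Y be a closed subspace of a real Banach space X. If for every hyperplane Z in Y (kernel of a nonzero functional in Y*) the quotient Y/Z has property-(U) in X/Z, then Y has property-(U) in X, i.e., every y* ∈ Y* has a unique norm-preserving extension to X. -/

import Mathlib

open NormedSpace Metric Set

namespace Paper

variable {X : Type*} [NormedAddCommGroup X] [NormedSpace ℝ X]

/-- The restriction of a continuous linear functional to a subspace. -/
noncomputable def restr (Y : Submodule ℝ X) (f : StrongDual ℝ X) : StrongDual ℝ ↥Y :=
  f.comp Y.subtypeL

/-- The annihilator `Y⊥` of a subspace `Y` in the dual. -/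
def ann (Y : Submodule ℝ X) : Set (StrongDual ℝ X) := {f | ∀ y ∈ Y, f y = 0}

/-- The set of norm-preserving (Hahn–Banach) extensions of `g : Y* ` to `X`. -/
def HB (Y : Submodule ℝ X) (g : StrongDual ℝ ↥Y) : Set (StrongDual ℝ X) :=
  {f | (∀ y : Y, f (y : X) = g y) ∧ ‖f‖ = ‖g‖}

/-- Best approximations to `x` from a set `A`. -/
def bestApprox {E : Type*} [NormedAddCommGroup E] (A : Set E) (x : E) : Set E :=
  {z ∈ A | ‖x - z‖ = infDist x A}

/-- Property-(U): every functional on `Y` has a unique norm-preserving extension to `X`. -/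
def propU (Y : Submodule ℝ X) : Prop :=
  ∀ g : StrongDual ℝ ↥Y, ∃! f : StrongDual ℝ X, f ∈ HB Y g

/-- `Y# `: the set of functionals whose norm equals the norm of their restriction to `Y`. -/
def sharp (Y : Submodule ℝ X) : Set (StrongDual ℝ X) := {f | ‖f‖ = ‖restr Y f‖}

/-- Property-(HB), stated via the decomposition `X* = Y# ⊕ Y⊥`. -/
def propHB (Y : Submodule ℝ X) : Prop :=
  (∀ f ∈ sharp Y, ∀ g ∈ sharp Y, f + g ∈ sharp Y) ∧
  (∀ (c : ℝ), ∀ f ∈ sharp Y, c • f ∈ sharp Y) ∧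
  (∀ f : StrongDual ℝ X, ∃ g ∈ sharp Y, ∃ h ∈ ann Y, f = g + h) ∧
  (∀ g ∈ sharp Y, ∀ h ∈ ann Y, h ≠ 0 → ‖g‖ < ‖g + h‖ ∧ ‖h‖ ≤ ‖g + h‖)

end Paper

open Paper ContinuousLinearMap

/-! A norm-preserving extension `f` of `g ∈ Y*` vanishes on the hyperplane `Z = ker g`, so it
descends to `X/Z` without changing its norm, and there it is a norm-preserving extension of the
functional `f|_Y` induces on `Y/Z`. Two extensions of the same `g` descend to extensions of the same
functional on `Y/Z`, so property-(U) of `Y/Z` in `X/Z` makes them coincide. -/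

namespace Paper

variable {X : Type*} [NormedAddCommGroup X] [NormedSpace ℝ X]

theorem mem_HB_iff {Y : Submodule ℝ X} {g : StrongDual ℝ Y} {f : StrongDual ℝ X} :
    f ∈ HB Y g ↔ restr Y f = g ∧ f ∈ sharp Y := by
  constructor
  · rintro ⟨hfg, hnorm⟩
    obtain rfl : restr Y f = g := ext hfg
    exact ⟨rfl, hnorm⟩
  · rintro ⟨rfl, hf⟩
    exact ⟨fun _ => rfl, hf⟩

theorem norm_restr_le (Y : Submodule ℝ X) (f : StrongDual ℝ X) : ‖restr Y f‖ ≤ ‖f‖ :=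
  opNorm_le_bound _ (norm_nonneg f) fun y => f.le_opNorm y

theorem eq_zero_of_mem_sharp_of_restr_eq_zero {Y : Submodule ℝ X} {f : StrongDual ℝ X}
    (hf : f ∈ sharp Y) (h : restr Y f = 0) : f = 0 := by
  rw [← norm_eq_zero, hf, h, opNorm_zero]

theorem propU_of_restr_injOn_sharp {Y : Submodule ℝ X}
    (h : Set.InjOn (restr Y) (sharp Y)) : propU Y := by
  intro g
  obtain ⟨f, hfg, hnorm⟩ := exists_extension_norm_eq Y g
  have hf : f ∈ HB Y g := ⟨hfg, hnorm⟩
  refine ⟨f, hf, fun f' hf' => ?_⟩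
  obtain ⟨hf'g, hf'⟩ := mem_HB_iff.mp hf'
  obtain ⟨hfg, hf⟩ := mem_HB_iff.mp hf
  exact h hf' hf (hf'g.trans hfg.symm)

theorem propU.restr_injOn_sharp {Y : Submodule ℝ X} (hU : propU Y) :
    Set.InjOn (restr Y) (sharp Y) := fun f₁ hf₁ _ hf₂ h =>
  (hU (restr Y f₁)).unique (mem_HB_iff.mpr ⟨rfl, hf₁⟩) (mem_HB_iff.mpr ⟨h.symm, hf₂⟩)

theorem map_subtype_ker_restr_le_ker (Y : Submodule ℝ X) (f : StrongDual ℝ X) :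
    (LinearMap.ker (restr Y f : Y →ₗ[ℝ] ℝ)).map Y.subtype ≤ f.ker := by
  rintro _ ⟨y, hy, rfl⟩
  exact hy

theorem isClosed_map_subtype_ker {Y : Submodule ℝ X} (hY : IsClosed (Y : Set X))
    (g : StrongDual ℝ Y) :
    IsClosed (((LinearMap.ker (g : Y →ₗ[ℝ] ℝ)).map Y.subtype : Submodule ℝ X) : Set X) := by
  rw [Submodule.map_coe]
  exact hY.isClosedEmbedding_subtypeVal.isClosedMap _ (isClosed_ker g)

theorem norm_liftQL (Z : Submodule ℝ X) (f : StrongDual ℝ X) (hf : Z ≤ f.ker) :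
    ‖Z.liftQL f hf‖ = ‖f‖ := by
  refine le_antisymm (opNorm_le_bound _ (norm_nonneg f) fun q => ?_)
    (opNorm_le_bound _ (opNorm_nonneg _) fun x => ?_)
  · -- Mathlib's quotient-norm estimate for lifts is stated for `NormedAddGroupHom`s.
    set φ := (f : X →+ ℝ).mkNormedAddGroupHom ‖f‖ f.le_opNorm
    calc ‖Z.liftQL f hf q‖ ≤ ‖φ‖ * ‖q‖ :=
          QuotientAddGroup.norm_lift_apply_le (S := Z.toAddSubgroup) φ (fun x hx => hf hx) q
      _ ≤ ‖f‖ * ‖q‖ := by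
          gcongr; exact AddMonoidHom.mkNormedAddGroupHom_norm_le _ (norm_nonneg f) _
  · calc ‖f x‖ = ‖Z.liftQL f hf (Z.mkQ x)‖ := rfl
      _ ≤ ‖Z.liftQL f hf‖ * ‖Z.mkQ x‖ := le_opNorm _ _
      _ ≤ ‖Z.liftQL f hf‖ * ‖x‖ := by gcongr; exact Submodule.Quotient.norm_mk_le Z x

theorem eq_of_liftQL_eq {Z : Submodule ℝ X} {f₁ f₂ : StrongDual ℝ X} {h₁ : Z ≤ f₁.ker}
    {h₂ : Z ≤ f₂.ker} (h : Z.liftQL f₁ h₁ = Z.liftQL f₂ h₂) : f₁ = f₂ :=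
  ext fun x => congr($h (Z.mkQ x))

section Quotient

variable {Y Z : Submodule ℝ X} [IsClosed (Z : Set X)]

theorem liftQL_mem_sharp_map_mkQ {f : StrongDual ℝ X} (hf : f ∈ sharp Y) (hZ : Z ≤ f.ker) :
    Z.liftQL f hZ ∈ sharp (Y.map Z.mkQ) := by
  refine le_antisymm ?_ (norm_restr_le _ _)
  rw [norm_liftQL, hf]
  refine opNorm_le_bound _ (opNorm_nonneg _) fun y => ?_
  set y' : Y.map Z.mkQ := ⟨Z.mkQ y, Submodule.mem_map_of_mem y.2⟩
  calc ‖restr Y f y‖ = ‖restr (Y.map Z.mkQ) (Z.liftQL f hZ) y'‖ := rfl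
    _ ≤ ‖restr (Y.map Z.mkQ) (Z.liftQL f hZ)‖ * ‖y'‖ := le_opNorm _ _
    _ ≤ ‖restr (Y.map Z.mkQ) (Z.liftQL f hZ)‖ * ‖y‖ := by
        gcongr; exact Submodule.Quotient.norm_mk_le Z y

theorem restr_map_mkQ_liftQL_eq_of_restr_eq {f₁ f₂ : StrongDual ℝ X} (h₁ : Z ≤ f₁.ker)
    (h₂ : Z ≤ f₂.ker) (h : restr Y f₁ = restr Y f₂) :
    restr (Y.map Z.mkQ) (Z.liftQL f₁ h₁) = restr (Y.map Z.mkQ) (Z.liftQL f₂ h₂) := by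
  ext ⟨_, y, hy, rfl⟩
  exact congr($h ⟨y, hy⟩)

end Quotient

end Paper

theorem stmt2_general {X : Type*} [NormedAddCommGroup X] [NormedSpace ℝ X]
    (Y : Submodule ℝ X) (hYc : IsClosed (Y : Set X))
    (h : ∀ g : StrongDual ℝ ↥Y, g ≠ 0 →
      ∀ [IsClosed (((LinearMap.ker (g : ↥Y →ₗ[ℝ] ℝ)).map Y.subtype : Submodule ℝ X) : Set X)],
        propU (X := X ⧸ ((LinearMap.ker (g : ↥Y →ₗ[ℝ] ℝ)).map Y.subtype : Submodule ℝ X))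
          (Y.map ((LinearMap.ker (g : ↥Y →ₗ[ℝ] ℝ)).map Y.subtype).mkQ)) :
    propU Y := by
  refine propU_of_restr_injOn_sharp fun f₁ hf₁ f₂ hf₂ hrestr => ?_
  by_cases hg : restr Y f₁ = 0
  · rw [eq_zero_of_mem_sharp_of_restr_eq_zero hf₁ hg,
      eq_zero_of_mem_sharp_of_restr_eq_zero hf₂ (hrestr ▸ hg)]
  have := isClosed_map_subtype_ker hYc (restr Y f₁)
  have hZ₁ := map_subtype_ker_restr_le_ker Y f₁
  have hZ₂ := hrestr ▸ map_subtype_ker_restr_le_ker Y f₂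
  exact eq_of_liftQL_eq <| (h _ hg).restr_injOn_sharp (liftQL_mem_sharp_map_mkQ hf₁ hZ₁)
    (liftQL_mem_sharp_map_mkQ hf₂ hZ₂) (restr_map_mkQ_liftQL_eq_of_restr_eq hZ₁ hZ₂ hrestr)

/-- if for every hyperplane `Z = ker g` in `Y` (`g ∈ Y*`, `g ≠ 0`) the quotient
`Y/Z` has property-(U) in `X/Z`, then `Y` has property-(U) in `X`. -/
theorem stmt2 {X : Type*} [NormedAddCommGroup X] [NormedSpace ℝ X] [CompleteSpace X]
    (Y : Submodule ℝ X) (hYc : IsClosed (Y : Set X))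
    (h : ∀ g : StrongDual ℝ ↥Y, g ≠ 0 →
      ∀ [IsClosed (((LinearMap.ker (g : ↥Y →ₗ[ℝ] ℝ)).map Y.subtype : Submodule ℝ X) : Set X)],
        propU (X := X ⧸ ((LinearMap.ker (g : ↥Y →ₗ[ℝ] ℝ)).map Y.subtype : Submodule ℝ X))
          (Y.map ((LinearMap.ker (g : ↥Y →ₗ[ℝ] ℝ)).map Y.subtype).mkQ)) :
    propU Y :=
  stmt2_general Y hYc h
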